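/- arXiv:1810.12270 — 3 statements merged into one kernel-verified Lean document; each statement's English description precedes it below -/
import Mathlib

section
/- Let K be a CM field of degree 2g with maximal totally real subfield F. The map sending an order O ⊆ O_K containing O_F to the ideal f⁺ = f ∩ O_F, where f is the conductor ideal of O, is a bijection from the set of orders of K containing O_F to the set of nonzero ideals of O_F, with inverse sending an ideal f⁺ ⊆ O_F to the order O_F + f⁺·O_K. -/
open NumberField

/-- `O` is an order in the number field `K`. -/
def IsOrder (K : Type*) [Field K] [NumberField K] (O : Subalgebra ℤ K) : Prop :=
  O ≤ integralClosure ℤ K ∧ ∃ n : ℕ, 0 < n ∧ ∀ x ∈ integralClosure ℤ K, (n : ℤ) • x ∈ O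

/-- The conductor `f = {α ∈ K : α·O_K ⊆ O}` of an order `O`. -/
def conductorSet (K : Type*) [Field K] [NumberField K] (O : Subalgebra ℤ K) : Set K :=
  {α : K | ∀ x ∈ integralClosure ℤ K, α * x ∈ O}

variable (F K : Type*) [Field F] [Field K] [NumberField F] [NumberField K] [Algebra F K]

/-- The image of `O_F` in `K`. -/
def OFset : Set K := Set.range (fun y : 𝓞 F => algebraMap F K (y : F))

/-- The image in `K` of an ideal of `O_F`. -/
def idealImage (I : Ideal (𝓞 F)) : Set K :=
  (fun y : 𝓞 F => algebraMap F K (y : F)) '' (I : Set (𝓞 F))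

/-- The extension `f⁺·O_K` of an ideal `f⁺ ⊆ O_F`, as an `O_K`-submodule of `K`. -/
noncomputable def extIdeal (I : Ideal (𝓞 F)) : Submodule ↥(integralClosure ℤ K) K :=
  Submodule.span ↥(integralClosure ℤ K) (idealImage F K I)

/-- The set `O_F + f⁺·O_K ⊆ K`. -/
noncomputable def ordSet (I : Ideal (𝓞 F)) : Set K :=
  {x : K | ∃ a ∈ OFset F K, ∃ b ∈ extIdeal F K I, x = a + b}

/-!
Since `[K : F] = 2` there is an `F`-linear `ψ : K → F` with kernel `F`. For `O_F ⊆ O ⊆ O_K` the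
kernel of `ψ` on `O_K` is `O_F ⊆ O`, so `O` is recovered from the fractional ideal `ψ(O)` inside
`𝔞 = ψ(O_K)`, and `ψ(O_F + I·O_K) = I𝔞`. As `O_F` is a Dedekind domain, `𝔞` is invertible: hence
`y ∈ f⁺ ↔ y𝔞 ⊆ ψ(O)` gives `f⁺(O_F + I·O_K) = I` after cancelling `𝔞`, and the integral ideal
`ψ(O)𝔞⁻¹ ⊆ f⁺` gives `ψ(O) ⊆ f⁺𝔞 = ψ(O_F + f⁺·O_K)`, i.e. `O = O_F + f⁺·O_K`.
-/

theorem FractionalIdeal.le_of_mul_le_mul_right {A K : Type*} [CommRing A] [IsDedekindDomain A]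
    [Field K] [Algebra A K] [IsFractionRing A K] {I J L : FractionalIdeal (nonZeroDivisors A) K}
    (hL : L ≠ 0) (h : I * L ≤ J * L) : I ≤ J := by
  simpa only [mul_assoc, mul_inv_cancel₀ hL, mul_one] using mul_le_mul_left h L⁻¹

namespace CMOrders

open scoped nonZeroDivisors
open LinearMap (ker range)

variable {F K : Type*} [Field F] [Field K] [Algebra F K]

theorem map_algebraMap_mul (ψ : K →ₗ[F] F) (r : 𝓞 F) (x : K) :
    ψ (algebraMap (𝓞 F) K r * x) = r * ψ x := by
  change ψ (algebraMap F K r * x) = _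
  rw [← Algebra.smul_def, map_smul, smul_eq_mul]

theorem algebraMap_mem_integralClosure (y : 𝓞 F) :
    algebraMap (𝓞 F) K y ∈ integralClosure ℤ K :=
  y.isIntegral_coe.map (IsScalarTower.toAlgHom ℤ F K)

theorem OFset_subset_integralClosure : OFset F K ⊆ integralClosure ℤ K := by
  rintro _ ⟨y, rfl⟩
  exact algebraMap_mem_integralClosure y

theorem mul_mem_extIdeal {I : Ideal (𝓞 F)} {z b : K} (hz : z ∈ integralClosure ℤ K)
    (hb : b ∈ extIdeal F K I) : z * b ∈ extIdeal F K I :=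
  Submodule.smul_mem _ (⟨z, hz⟩ : integralClosure ℤ K) hb

theorem algebraMap_mul_mem_extIdeal {I : Ideal (𝓞 F)} {y : 𝓞 F} (hy : y ∈ I) {z : K}
    (hz : z ∈ integralClosure ℤ K) : algebraMap (𝓞 F) K y * z ∈ extIdeal F K I := by
  rw [mul_comm]
  exact mul_mem_extIdeal hz (Submodule.subset_span ⟨y, hy, rfl⟩)

theorem extIdeal_subset_of_mul_mem {I : Ideal (𝓞 F)} {M : AddSubgroup K}
    (h : ∀ y ∈ I, ∀ z ∈ integralClosure ℤ K, algebraMap (𝓞 F) K y * z ∈ M) :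
    (extIdeal F K I : Set K) ⊆ M := by
  intro b hb
  suffices ∀ z ∈ integralClosure ℤ K, z * b ∈ M by simpa using this 1 (one_mem _)
  induction hb using Submodule.span_induction with
  | mem _ hx =>
    obtain ⟨y, hy, rfl⟩ := hx
    intro z hz
    rw [mul_comm]
    exact h y hy z hz
  | zero => simp [zero_mem]
  | add u v _ _ hu hv =>
    intro z hz
    rw [mul_add]
    exact add_mem (hu z hz) (hv z hz)
  | smul c u _ hu =>
    intro z hz
    change z * ((c : K) * u) ∈ M
    rw [← mul_assoc]
    exact hu _ (mul_mem hz c.2)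

theorem extIdeal_subset_integralClosure (I : Ideal (𝓞 F)) :
    (extIdeal F K I : Set K) ⊆ integralClosure ℤ K :=
  extIdeal_subset_of_mul_mem (M := (integralClosure ℤ K).toSubring.toAddSubgroup)
    fun y _ _ hz => (mul_mem (algebraMap_mem_integralClosure y) hz : _ ∈ integralClosure ℤ K)

variable (K) in
def orderOfIdeal (I : Ideal (𝓞 F)) : Subalgebra ℤ K where
  carrier := ordSet F K I
  algebraMap_mem' r :=
    ⟨r, intCast_mem (algebraMap (𝓞 F) K).range r, 0, zero_mem _, by simp⟩
  add_mem' := by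
    rintro _ _ ⟨a, ha, b, hb, rfl⟩ ⟨a', ha', b', hb', rfl⟩
    exact ⟨a + a', (algebraMap (𝓞 F) K).range.add_mem ha ha', b + b', add_mem hb hb',
      by ring⟩
  mul_mem' := by
    rintro _ _ ⟨a, ha, b, hb, rfl⟩ ⟨a', ha', b', hb', rfl⟩
    have hbK := extIdeal_subset_integralClosure I hb
    refine ⟨a * a', (algebraMap (𝓞 F) K).range.mul_mem ha ha', a * b' + a' * b + b * b',
      add_mem (add_mem ?_ ?_) (mul_mem_extIdeal hbK hb'), by ring⟩
    · exact mul_mem_extIdeal (OFset_subset_integralClosure ha) hb'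
    · exact mul_mem_extIdeal (OFset_subset_integralClosure ha') hb

theorem OFset_subset_orderOfIdeal (I : Ideal (𝓞 F)) : OFset F K ⊆ orderOfIdeal K I :=
  fun a ha => ⟨a, ha, 0, zero_mem _, (add_zero a).symm⟩

theorem extIdeal_subset_orderOfIdeal (I : Ideal (𝓞 F)) :
    (extIdeal F K I : Set K) ⊆ orderOfIdeal K I :=
  fun b hb => ⟨0, ⟨0, map_zero _⟩, b, hb, (zero_add b).symm⟩

theorem orderOfIdeal_le_integralClosure (I : Ideal (𝓞 F)) :
    orderOfIdeal K I ≤ integralClosure ℤ K := by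
  rintro _ ⟨a, ha, b, hb, rfl⟩
  exact add_mem (OFset_subset_integralClosure ha) (extIdeal_subset_integralClosure I hb)

def psiImage (ψ : K →ₗ[F] F) (O : Subalgebra ℤ K) (hOF : OFset F K ⊆ O) :
    Submodule (𝓞 F) F where
  carrier := ψ '' O
  add_mem' := by
    rintro _ _ ⟨x, hx, rfl⟩ ⟨y, hy, rfl⟩
    exact ⟨x + y, add_mem hx hy, map_add ψ x y⟩
  zero_mem' := ⟨0, zero_mem O, map_zero ψ⟩
  smul_mem' := by
    rintro r _ ⟨x, hx, rfl⟩
    exact ⟨algebraMap (𝓞 F) K r * x, mul_mem (hOF ⟨r, rfl⟩) hx, map_algebraMap_mul ψ _ x⟩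

theorem map_algebraMap_eq_zero {ψ : K →ₗ[F] F} (hψ : ker ψ = range (Algebra.linearMap F K))
    (a : F) : ψ (algebraMap F K a) = 0 := by
  rw [← LinearMap.mem_ker, hψ]
  exact ⟨a, rfl⟩

theorem mem_OFset_of_map_eq_zero {ψ : K →ₗ[F] F} (hψ : ker ψ = range (Algebra.linearMap F K))
    {x : K} (hx : x ∈ integralClosure ℤ K) (h : ψ x = 0) : x ∈ OFset F K := by
  obtain ⟨a, rfl⟩ : x ∈ range (Algebra.linearMap F K) := hψ ▸ h
  exact ⟨⟨a, (isIntegral_algebraMap_iff (algebraMap F K).injective).mp hx⟩, rfl⟩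

variable [NumberField K]

/-- The ideal `f⁺ = f ∩ O_F` of `O_F`, for `f` the conductor of `O`. -/
def conductorIdeal (O : Subalgebra ℤ K) (hOF : OFset F K ⊆ O) : Ideal (𝓞 F) where
  carrier := {y | algebraMap (𝓞 F) K y ∈ conductorSet K O}
  add_mem' {a b} ha hb x hx := by
    rw [map_add, add_mul]
    exact add_mem (ha x hx) (hb x hx)
  zero_mem' x _ := by
    rw [map_zero, zero_mul]
    exact zero_mem O
  smul_mem' r y hy x hx := by
    rw [smul_eq_mul, map_mul, mul_assoc]
    exact mul_mem (hOF ⟨r, rfl⟩) (hy x hx)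

theorem idealImage_conductorIdeal (O : Subalgebra ℤ K) (hOF : OFset F K ⊆ O) :
    idealImage F K (conductorIdeal O hOF) = conductorSet K O ∩ OFset F K := by
  ext α
  constructor
  · rintro ⟨y, hy, rfl⟩
    exact ⟨hy, y, rfl⟩
  · rintro ⟨hα, y, rfl⟩
    exact ⟨y, hα, rfl⟩

theorem orderOfIdeal_conductorIdeal_le (O : Subalgebra ℤ K) (hOF : OFset F K ⊆ O) :
    orderOfIdeal K (conductorIdeal O hOF) ≤ O := by
  rintro _ ⟨a, ha, b, hb, rfl⟩
  exact add_mem (hOF ha)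
    (extIdeal_subset_of_mul_mem (I := conductorIdeal O hOF) (M := O.toSubring.toAddSubgroup)
      (fun _ hy => hy) hb)

theorem le_conductorIdeal_orderOfIdeal (I : Ideal (𝓞 F)) :
    I ≤ conductorIdeal (orderOfIdeal K I) (OFset_subset_orderOfIdeal I) :=
  fun _ hy _ hx => extIdeal_subset_orderOfIdeal I (algebraMap_mul_mem_extIdeal hy hx)

theorem psiImage_fg (ψ : K →ₗ[F] F) {O : Subalgebra ℤ K} (hOF : OFset F K ⊆ O)
    (hO : O ≤ integralClosure ℤ K) : (psiImage ψ O hOF).FG := by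
  have : Module.Finite ℤ (Subalgebra.toSubmodule (integralClosure ℤ K)) :=
    inferInstanceAs (Module.Finite ℤ (𝓞 K))
  have hfg : (Subalgebra.toSubmodule O).FG :=
    Submodule.FG.of_le_of_isNoetherian (T := Subalgebra.toSubmodule (integralClosure ℤ K)) hO
  exact .of_restrictScalars ℤ (hfg.map (ψ.restrictScalars ℤ))

variable [NumberField F]

theorem isOrder_orderOfIdeal {I : Ideal (𝓞 F)} (hI : I ≠ ⊥) : IsOrder K (orderOfIdeal K I) := by
  refine ⟨orderOfIdeal_le_integralClosure I, Ideal.absNorm I,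
    Nat.pos_of_ne_zero (mt Ideal.absNorm_eq_zero_iff.mp hI), fun x hx => ?_⟩
  have hN : ((Ideal.absNorm I : ℤ) : 𝓞 F) ∈ I := by exact_mod_cast Ideal.absNorm_mem I
  have := extIdeal_subset_orderOfIdeal I (algebraMap_mul_mem_extIdeal hN hx)
  rwa [map_intCast, ← zsmul_eq_mul] at this

theorem conductorIdeal_ne_bot {O : Subalgebra ℤ K} (hO : IsOrder K O) (hOF : OFset F K ⊆ O) :
    conductorIdeal O hOF ≠ ⊥ := by
  obtain ⟨-, n, hn, hnO⟩ := hO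
  have hmem : ((n : ℤ) : 𝓞 F) ∈ conductorIdeal O hOF := fun x hx => by
    rw [map_intCast, ← zsmul_eq_mul]
    exact hnO x hx
  intro hbot
  rw [hbot, Ideal.mem_bot] at hmem
  have : (n : ℤ) = 0 := by exact_mod_cast hmem
  omega

section Functional

variable (ψ : K →ₗ[F] F)

noncomputable def psiFrac {O : Subalgebra ℤ K} (hOF : OFset F K ⊆ O)
    (hO : O ≤ integralClosure ℤ K) : FractionalIdeal (𝓞 F)⁰ F :=
  ⟨psiImage ψ O hOF, FractionalIdeal.isFractional_of_fg (psiImage_fg ψ hOF hO)⟩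

local notation "𝔞" => psiFrac ψ OFset_subset_integralClosure le_rfl

theorem psiFrac_integralClosure_ne_zero (hψ0 : ψ ≠ 0) : 𝔞 ≠ 0 := by
  obtain ⟨t, ht⟩ : ∃ t, ψ t ≠ 0 := by
    by_contra! h
    exact hψ0 (LinearMap.ext h)
  obtain ⟨n, hn, hnt⟩ := ((IsFractionRing.isAlgebraic_iff ℤ ℚ K).mpr
    (Algebra.IsAlgebraic.isAlgebraic t)).exists_integral_multiple
  intro h𝔞
  have : ψ (n • t) ∈ 𝔞 := ⟨n • t, hnt, rfl⟩
  rw [h𝔞, FractionalIdeal.mem_zero_iff, map_zsmul] at this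
  exact smul_ne_zero hn ht this

theorem map_mem_mul_psiFrac_of_mem_extIdeal {I : Ideal (𝓞 F)} {b : K}
    (hb : b ∈ extIdeal F K I) : ψ b ∈ (I : FractionalIdeal (𝓞 F)⁰ F) * 𝔞 :=
  extIdeal_subset_of_mul_mem
    (M := (((I : FractionalIdeal (𝓞 F)⁰ F) * 𝔞 : FractionalIdeal (𝓞 F)⁰ F) :
      Submodule (𝓞 F) F).toAddSubgroup.comap ψ.toAddMonoidHom)
    (fun y hy z hz => by
      simp only [AddSubgroup.mem_comap, LinearMap.toAddMonoidHom_coe, map_algebraMap_mul]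
      exact FractionalIdeal.mul_mem_mul (FractionalIdeal.mem_coeIdeal_of_mem _ hy) ⟨z, hz, rfl⟩)
    hb

variable {ψ}

theorem mem_of_map_mem_psiFrac (hψ : ker ψ = range (Algebra.linearMap F K))
    {O : Subalgebra ℤ K} {hOF : OFset F K ⊆ O} {hO : O ≤ integralClosure ℤ K}
    {x : K} (hx : x ∈ integralClosure ℤ K) (h : ψ x ∈ psiFrac ψ hOF hO) : x ∈ O := by
  obtain ⟨w, hw, hψw⟩ := h
  have : x - w ∈ OFset F K :=
    mem_OFset_of_map_eq_zero hψ (sub_mem hx (hO hw)) (by rw [map_sub, hψw, sub_self])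
  simpa using add_mem (hOF this) hw

theorem mem_conductorIdeal_iff (hψ : ker ψ = range (Algebra.linearMap F K))
    {O : Subalgebra ℤ K} {hOF : OFset F K ⊆ O} (hO : O ≤ integralClosure ℤ K) {y : 𝓞 F} :
    y ∈ conductorIdeal O hOF ↔
      FractionalIdeal.spanSingleton _ (y : F) * 𝔞 ≤ psiFrac ψ hOF hO := by
  rw [FractionalIdeal.spanSingleton_mul_le_iff]
  constructor
  · rintro hy _ ⟨x, hx, rfl⟩
    exact ⟨_, hy x hx, map_algebraMap_mul ψ _ x⟩
  · intro hy x hx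
    refine mem_of_map_mem_psiFrac hψ (hOF := hOF) (hO := hO)
      (mul_mem (algebraMap_mem_integralClosure y) hx) ?_
    rw [map_algebraMap_mul]
    exact hy _ ⟨x, hx, rfl⟩

theorem psiFrac_orderOfIdeal (hψ : ker ψ = range (Algebra.linearMap F K)) (I : Ideal (𝓞 F)) :
    psiFrac ψ (OFset_subset_orderOfIdeal I) (orderOfIdeal_le_integralClosure I) =
      (I : FractionalIdeal (𝓞 F)⁰ F) * 𝔞 := by
  refine le_antisymm ?_ (FractionalIdeal.mul_le.mpr ?_)
  · rintro _ ⟨_, ⟨_, ⟨a, rfl⟩, b, hb, rfl⟩, rfl⟩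
    rw [map_add, map_algebraMap_eq_zero hψ, zero_add]
    exact map_mem_mul_psiFrac_of_mem_extIdeal ψ hb
  · rintro _ hi _ ⟨x, hx, rfl⟩
    obtain ⟨y, hy, rfl⟩ := (FractionalIdeal.mem_coeIdeal _).mp hi
    exact ⟨_, extIdeal_subset_orderOfIdeal I (algebraMap_mul_mem_extIdeal hy hx),
      map_algebraMap_mul ψ _ x⟩

theorem psiFrac_le_conductorIdeal_mul (hψ : ker ψ = range (Algebra.linearMap F K))
    (hψ0 : ψ ≠ 0) {O : Subalgebra ℤ K} {hOF : OFset F K ⊆ O} (hO : O ≤ integralClosure ℤ K) :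
    psiFrac ψ hOF hO ≤ (conductorIdeal O hOF : FractionalIdeal (𝓞 F)⁰ F) * 𝔞 := by
  have h𝔞 := psiFrac_integralClosure_ne_zero ψ hψ0
  have hle : psiFrac ψ hOF hO * 𝔞⁻¹ ≤ 1 :=
    (mul_le_mul_left (fun _ ⟨x, hx, hψx⟩ => ⟨x, hO hx, hψx⟩) _).trans (mul_inv_cancel₀ h𝔞).le
  obtain ⟨J, hJ⟩ := FractionalIdeal.le_one_iff_exists_coeIdeal.mp hle
  have hc : psiFrac ψ hOF hO = J * 𝔞 := by rw [hJ, mul_assoc, inv_mul_cancel₀ h𝔞, mul_one]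
  have hJle : J ≤ conductorIdeal O hOF := fun y hy => by
    rw [mem_conductorIdeal_iff hψ hO, hc]
    exact mul_le_mul_left
      (FractionalIdeal.spanSingleton_le_iff_mem.mpr (FractionalIdeal.mem_coeIdeal_of_mem _ hy)) _
  rw [hc]
  exact mul_le_mul_left ((FractionalIdeal.coeIdeal_le_coeIdeal F).mpr hJle) _

theorem conductorIdeal_orderOfIdeal (hψ : ker ψ = range (Algebra.linearMap F K)) (hψ0 : ψ ≠ 0)
    (I : Ideal (𝓞 F)) : conductorIdeal (orderOfIdeal K I) (OFset_subset_orderOfIdeal I) = I := by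
  refine le_antisymm (fun y hy => ?_) (le_conductorIdeal_orderOfIdeal I)
  rw [mem_conductorIdeal_iff hψ (orderOfIdeal_le_integralClosure I), psiFrac_orderOfIdeal hψ,
    ← FractionalIdeal.coeIdeal_span_singleton] at hy
  have := FractionalIdeal.le_of_mul_le_mul_right (psiFrac_integralClosure_ne_zero ψ hψ0) hy
  rwa [FractionalIdeal.coeIdeal_le_coeIdeal, Ideal.span_singleton_le_iff_mem] at this

theorem orderOfIdeal_conductorIdeal (hψ : ker ψ = range (Algebra.linearMap F K)) (hψ0 : ψ ≠ 0)
    {O : Subalgebra ℤ K} (hOF : OFset F K ⊆ O) (hO : O ≤ integralClosure ℤ K) :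
    orderOfIdeal K (conductorIdeal O hOF) = O := by
  refine le_antisymm (orderOfIdeal_conductorIdeal_le O hOF) fun x hx => ?_
  refine mem_of_map_mem_psiFrac hψ (hOF := OFset_subset_orderOfIdeal _)
    (hO := orderOfIdeal_le_integralClosure _) (hO hx) ?_
  rw [psiFrac_orderOfIdeal hψ]
  exact psiFrac_le_conductorIdeal_mul hψ hψ0 hO ⟨x, hx, rfl⟩

end Functional

theorem exists_ne_zero_ker_eq_range (hquad : Module.finrank F K = 2) :
    ∃ ψ : K →ₗ[F] F, ψ ≠ 0 ∧ ker ψ = range (Algebra.linearMap F K) := by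
  have : FiniteDimensional F K := Module.finite_of_finrank_pos (by omega)
  set p := range (Algebra.linearMap F K)
  have hp : Module.finrank F p = 1 := by
    rw [LinearMap.finrank_range_of_inj (algebraMap F K).injective, Module.finrank_self]
  have hq : Module.finrank F (K ⧸ p) = Module.finrank F F := by
    have := p.finrank_quotient_add_finrank
    rw [Module.finrank_self]
    omega
  set e := LinearEquiv.ofFinrankEq _ _ hq
  refine ⟨e.toLinearMap ∘ₗ p.mkQ, fun h => ?_, by rw [LinearEquiv.ker_comp, p.ker_mkQ]⟩
  have htop : p = ⊤ := by rw [← p.ker_mkQ, ← LinearEquiv.ker_comp e, h, LinearMap.ker_zero]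
  rw [htop, finrank_top] at hp
  omega

end CMOrders

theorem orders_containing_OF_biject_with_ideals_of_OF
    (hquad : Module.finrank F K = 2) :
    ∃ e : {O : Subalgebra ℤ K // IsOrder K O ∧ OFset F K ⊆ (O : Set K)} ≃
          {I : Ideal (𝓞 F) // I ≠ ⊥},
      (∀ O : {O : Subalgebra ℤ K // IsOrder K O ∧ OFset F K ⊆ (O : Set K)},
        idealImage F K (e O).1 = conductorSet K O.1 ∩ OFset F K) ∧
      (∀ I : {I : Ideal (𝓞 F) // I ≠ ⊥},
        ((e.symm I).1 : Set K) = ordSet F K I.1) := by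
  obtain ⟨ψ, hψ0, hψ⟩ := CMOrders.exists_ne_zero_ker_eq_range hquad
  refine ⟨{ toFun := fun O => ⟨_, CMOrders.conductorIdeal_ne_bot O.2.1 O.2.2⟩
            invFun := fun I =>
              ⟨_, CMOrders.isOrder_orderOfIdeal I.2, CMOrders.OFset_subset_orderOfIdeal I.1⟩
            left_inv := fun O =>
              Subtype.ext (CMOrders.orderOfIdeal_conductorIdeal hψ hψ0 O.2.2 O.2.1.1)
            right_inv := fun I =>
              Subtype.ext (CMOrders.conductorIdeal_orderOfIdeal hψ hψ0 I.1) },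
    fun O => CMOrders.idealImage_conductorIdeal O.1 O.2.2, fun I => rfl⟩
end

section
/- Let K be a CM field with maximal totally real subfield F and let O = O_F + f⁺·O_K for a nonzero ideal f⁺ of O_F. Then the conductor of O satisfies f ∩ O_F = f⁺, i.e., the intersection with O_F of the conductor ideal of O recovers f⁺. -/
open NumberField

variable (F K : Type*) [Field F] [Field K] [NumberField F] [NumberField K] [Algebra F K]

/-!
Let `a ∈ O_F` with `a O_K ⊆ O_F + f⁺ O_K`. Since `[K : F] > 1` there is a nonzero `F`-linear
form `λ : K → F` with `λ 1 = 0`; it kills `O_F`, so the nonzero finitely generated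
`O_F`-submodule `J = λ(O_K)` of `F` satisfies `a J ⊆ f⁺ J`. As `J` is an invertible fractional
ideal of the Dedekind domain `O_F`, this forces `a ∈ f⁺`. The reverse inclusion is immediate.
-/

open nonZeroDivisors Module
open scoped Pointwise

theorem Ideal.mem_of_smul_le_smul {R L : Type*} [CommRing R] [IsDedekindDomain R] [Field L]
    [Algebra R L] [IsFractionRing R L] {I : Ideal R} {J : Submodule R L} (hJ : J.FG)
    (hJ0 : J ≠ ⊥) {a : R} (h : a • J ≤ I • J) : a ∈ I := by
  let B : FractionalIdeal R⁰ L := ⟨J, FractionalIdeal.isFractional_of_fg hJ⟩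
  have hB : B ≠ 0 := fun h0 => hJ0 (by simpa [B] using congrArg FractionalIdeal.coeToSubmodule h0)
  have hle : ((Ideal.span {a} : Ideal R) : FractionalIdeal R⁰ L) * B ≤ I * B := by
    rw [FractionalIdeal.coeIdeal_span_singleton, ← FractionalIdeal.coe_le_coe,
      FractionalIdeal.coe_mul, FractionalIdeal.coe_mul, FractionalIdeal.coe_spanSingleton,
      Submodule.span_singleton_mul, FractionalIdeal.coe_coeIdeal]
    have hsmul : algebraMap R L a • J = a • J := by
      ext x
      simp only [Submodule.mem_smul_pointwise_iff_exists, algebraMap_smul]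
    refine (hsmul.trans_le h).trans (Submodule.smul_le.mpr fun i hi j hj => ?_)
    rw [Algebra.smul_def]
    exact Submodule.mul_mem_mul (Submodule.mem_map_of_mem hi) hj
  have := by simpa only [mul_assoc, mul_inv_cancel₀ hB, mul_one] using mul_le_mul_left hle B⁻¹
  rwa [FractionalIdeal.coeIdeal_le_coeIdeal, Ideal.span_singleton_le_iff_mem] at this

theorem Ideal.mem_of_smul_top_le_sup_smul_top {R L M : Type*} [CommRing R] [IsDedekindDomain R]
    [Field L] [Algebra R L] [IsFractionRing R L] [AddCommGroup M] [Module R M] [Module.Finite R M]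
    {I : Ideal R} {N : Submodule R M} (g : M →ₗ[R] L) (hg : g ≠ 0) (hN : N ≤ LinearMap.ker g)
    {a : R} (h : a • (⊤ : Submodule R M) ≤ N ⊔ I • ⊤) : a ∈ I := by
  refine Ideal.mem_of_smul_le_smul (Module.Finite.fg_top.map g)
    (by rwa [← LinearMap.range_eq_map, ne_eq, LinearMap.range_eq_bot]) ?_
  calc a • (⊤ : Submodule R M).map g = (a • ⊤ : Submodule R M).map g :=
        (Submodule.map_pointwise_smul ..).symm
    _ ≤ (N ⊔ I • ⊤).map g := Submodule.map_mono h
    _ = I • (⊤ : Submodule R M).map g := by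
      rw [Submodule.map_sup, Submodule.map_smul'', LinearMap.le_ker_iff_map.mp hN, bot_sup_eq]

theorem Module.exists_dual_ne_zero_apply_eq_zero {k V : Type*} [Field k] [AddCommGroup V]
    [Module k V] (h : 1 < finrank k V) (v : V) : ∃ f : Dual k V, f ≠ 0 ∧ f v = 0 := by
  have : FiniteDimensional k V := Module.finite_of_finrank_pos (by omega)
  have hlt : k ∙ v < ⊤ := Submodule.lt_top_of_finrank_lt_finrank <|
    ((finrank_span_le_card {v}).trans (by simp)).trans_lt h
  obtain ⟨f, hf, hmap⟩ := Submodule.exists_dual_map_eq_bot_of_lt_top hlt inferInstance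
  refine ⟨f, hf, ?_⟩
  simpa [hmap] using Submodule.mem_map_of_mem (f := f) (Submodule.mem_span_singleton_self v)

section
variable {F K}

omit [NumberField F] [NumberField K]

theorem exists_mem_map_of_mem_extIdeal {I : Ideal (𝓞 F)} {b : K} (hb : b ∈ extIdeal F K I) :
    ∃ z ∈ I.map (algebraMap (𝓞 F) (𝓞 K)), (z : K) = b := by
  induction hb using Submodule.span_induction with
  | mem _ hy =>
    obtain ⟨y, hy, rfl⟩ := hy
    exact ⟨algebraMap (𝓞 F) (𝓞 K) y, Ideal.mem_map_of_mem _ hy, rfl⟩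
  | zero => exact ⟨0, zero_mem _, rfl⟩
  | add _ _ _ _ h₁ h₂ =>
    obtain ⟨z₁, hz₁, rfl⟩ := h₁
    obtain ⟨z₂, hz₂, rfl⟩ := h₂
    exact ⟨z₁ + z₂, add_mem hz₁ hz₂, rfl⟩
  | smul c _ _ h =>
    obtain ⟨z, hz, rfl⟩ := h
    exact ⟨⟨c, c.2⟩ * z, Ideal.mul_mem_left _ _ hz, rfl⟩

theorem mem_sup_smul_top_of_coe_mem_ordSet {I : Ideal (𝓞 F)} {x : 𝓞 K}
    (hx : (x : K) ∈ ordSet F K I) :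
    x ∈ LinearMap.range (Algebra.linearMap (𝓞 F) (𝓞 K)) ⊔ I • ⊤ := by
  obtain ⟨_, ⟨c, rfl⟩, b, hb, hxb⟩ := hx
  obtain ⟨z, hz, rfl⟩ := exists_mem_map_of_mem_extIdeal hb
  rw [Ideal.smul_top_eq_map]
  exact Submodule.mem_sup.mpr ⟨_, ⟨c, rfl⟩, z, hz, (RingOfIntegers.ext hxb).symm⟩

theorem algebraMap_mul_mem_ordSet {I : Ideal (𝓞 F)} {a : 𝓞 F} (ha : a ∈ I) {x : K}
    (hx : x ∈ integralClosure ℤ K) : algebraMap F K a * x ∈ ordSet F K I := by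
  refine ⟨0, ⟨0, by simp⟩, algebraMap F K a * x, ?_, (zero_add _).symm⟩
  rw [mul_comm]
  exact (extIdeal F K I).smul_mem (⟨x, hx⟩ : integralClosure ℤ K)
    (Submodule.subset_span ⟨a, ha, rfl⟩)

end

section
variable {F K}

theorem LinearMap.exists_ringOfIntegers_apply_ne_zero {f : K →ₗ[F] F} (hf : f ≠ 0) :
    ∃ x : 𝓞 K, f x ≠ 0 := by
  obtain ⟨y, hy⟩ : ∃ y, f y ≠ 0 := by
    by_contra! h
    exact hf (LinearMap.ext h)
  obtain ⟨r, x, hr, hx⟩ :=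
    ((IsFractionRing.isAlgebraic_iff (𝓞 F) F K).mpr (.of_finite F y)).exists_smul_eq (𝓞 K)
  refine ⟨x, ?_⟩
  change f (algebraMap (𝓞 K) K x) ≠ 0
  rw [← hx, LinearMap.map_smul_of_tower]
  exact smul_ne_zero hr hy

theorem mem_of_forall_algebraMap_mul_mem_ordSet (hK : 1 < finrank F K) {I : Ideal (𝓞 F)}
    {a : 𝓞 F} (h : ∀ x ∈ integralClosure ℤ K, algebraMap F K a * x ∈ ordSet F K I) : a ∈ I := by
  obtain ⟨f, hf, hf1⟩ := Module.exists_dual_ne_zero_apply_eq_zero hK (1 : K)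
  let g : 𝓞 K →ₗ[𝓞 F] F :=
    (f.restrictScalars (𝓞 F)).comp (IsScalarTower.toAlgHom (𝓞 F) (𝓞 K) K).toLinearMap
  refine Ideal.mem_of_smul_top_le_sup_smul_top g
    (N := LinearMap.range (Algebra.linearMap (𝓞 F) (𝓞 K))) ?_ ?_ ?_
  · obtain ⟨x, hx⟩ := LinearMap.exists_ringOfIntegers_apply_ne_zero hf
    exact fun hg => hx (LinearMap.congr_fun hg x)
  · rintro _ ⟨c, rfl⟩
    change f (algebraMap (𝓞 F) K c) = 0
    rw [Algebra.algebraMap_eq_smul_one, LinearMap.map_smul_of_tower, hf1, smul_zero]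
  · rintro _ ⟨x, -, rfl⟩
    exact mem_sup_smul_top_of_coe_mem_ordSet (h x x.2)

end

theorem conductor_inter_OF_eq
    (hquad : Module.finrank F K = 2)
    (I : Ideal (𝓞 F)) :
    ∀ O : Subalgebra ℤ K, (O : Set K) = ordSet F K I →
      conductorSet K O ∩ OFset F K = idealImage F K I := by
  intro O hO
  have hmem : ∀ y, y ∈ O ↔ y ∈ ordSet F K I := fun y => by rw [← SetLike.mem_coe, hO]
  ext α
  constructor
  · rintro ⟨hα, a, rfl⟩
    exact ⟨a, mem_of_forall_algebraMap_mul_mem_ordSet (by omega)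
      fun x hx => (hmem _).mp (hα x hx), rfl⟩
  · rintro ⟨a, ha, rfl⟩
    exact ⟨fun x hx => (hmem _).mpr (algebraMap_mul_mem_ordSet ha hx), a, rfl⟩
end

section
/- Let K/F be a quadratic extension of number fields and let p be a prime of O_F that splits in O_K as p·O_K = P·P̄ with P ≠ P̄. Let f⁺ ⊆ O_F be an ideal divisible by p, f = f⁺·O_K, and m = f·P^{-1}. Then the composite map (O_F/f⁺)^* → (O_K/f)^* → (O_K/m)^* (inclusion followed by reduction) is injective. -/
open NumberField

/-!
Injectivity amounts to `m ∩ O_F ⊆ f⁺`, which can be checked one prime `q` of `O_F` at a time.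
For a prime `Q` of `O_K` above `q`, extension of ideals multiplies `q`-adic valuations by
`e(Q|q)`, and if `Q ≠ P` then `v_Q(m) = v_Q(P m) = v_Q(f⁺ O_K)`. Such a `Q` exists for every `q`:
above `p` take `P̄`, and `P` lies over no other prime.
-/

namespace Ideal

variable {R S : Type*} [CommRing R] [CommRing S] [Algebra R S]

theorem liesOver_of_map_le {p : Ideal R} [p.IsMaximal] {P : Ideal S} [P.IsPrime]
    (h : p.map (algebraMap R S) ≤ P) : P.LiesOver p :=
  ⟨IsMaximal.eq_of_le ‹_› (comap_ne_top _ IsPrime.ne_top') (le_comap_of_map_le h)⟩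

variable [IsDedekindDomain R] [IsDedekindDomain S] [FaithfulSMul R S]

theorem exists_prime_liesOver_ne_of_map_eq_mul [Algebra.IsIntegral R S] {p : Ideal R}
    (hp : p.IsPrime) (hpbot : p ≠ ⊥) {P Pbar : Ideal S} (hP : P.IsPrime) (hPbar : Pbar.IsPrime)
    (hne : P ≠ Pbar) (hsplit : p.map (algebraMap R S) = P * Pbar) (v : Ideal R) (hv : Prime v) :
    ∃ w : Ideal S, Prime w ∧ w.LiesOver v ∧ w ≠ P := by
  have := hp.isMaximal hpbot
  have hPp : P.LiesOver p := liesOver_of_map_le (hsplit.le.trans mul_le_left)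
  rcases eq_or_ne v p with rfl | hvp
  · have hPbarp : Pbar.LiesOver v := liesOver_of_map_le (hsplit.le.trans mul_le_right)
    exact ⟨Pbar, prime_of_isPrime (ne_bot_of_liesOver_of_ne_bot hpbot Pbar) hPbar, hPbarp,
      hne.symm⟩
  have := (isPrime_of_prime hv).isMaximal hv.ne_zero
  obtain ⟨w, hw, hwv⟩ := exists_maximal_ideal_liesOver_of_isIntegral (S := S) v
  refine ⟨w, prime_of_isPrime (ne_bot_of_liesOver_of_ne_bot hv.ne_zero w) hw.isPrime, hwv, ?_⟩
  rintro rfl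
  exact hvp ((over_def w v).trans (over_def w p).symm)

theorem le_of_forall_exists_emultiplicity_map_le {I J : Ideal R} (hI : I ≠ ⊥)
    (h : ∀ v : Ideal R, Prime v → ∃ w : Ideal S, Prime w ∧ w.LiesOver v ∧
      emultiplicity w (I.map (algebraMap R S)) ≤ emultiplicity w (J.map (algebraMap R S))) :
    J ≤ I := by
  rcases eq_or_ne J ⊥ with rfl | hJ
  · exact bot_le
  rw [← dvd_iff_le, UniqueFactorizationMonoid.dvd_iff_emultiplicity_le hI]
  intro v hv
  obtain ⟨w, hw, _, hle⟩ := h v hv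
  have := isPrime_of_prime hw
  have he : (v.ramificationIdx' w : ℕ∞) ≠ 0 := by
    exact_mod_cast IsDedekindDomain.ramificationIdx'_ne_zero_of_liesOver w hv.ne_zero
  rwa [IsDedekindDomain.emultiplicity_map_eq_ramificationIdx'_mul hI hv.irreducible
      hw.irreducible hw.ne_zero,
    IsDedekindDomain.emultiplicity_map_eq_ramificationIdx'_mul hJ hv.irreducible
      hw.irreducible hw.ne_zero,
    ENat.mul_le_mul_left_iff he (ENat.natCast_ne_top _)] at hle

theorem comap_le_of_forall_exists_emultiplicity_map_le {I : Ideal R} {M : Ideal S} (hI : I ≠ ⊥)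
    (h : ∀ v : Ideal R, Prime v → ∃ w : Ideal S, Prime w ∧ w.LiesOver v ∧
      emultiplicity w (I.map (algebraMap R S)) ≤ emultiplicity w M) :
    M.comap (algebraMap R S) ≤ I :=
  le_of_forall_exists_emultiplicity_map_le hI fun v hv ↦
    (h v hv).imp fun _ ⟨hw, hwv, hle⟩ ↦ ⟨hw, hwv, hle.trans <|
      emultiplicity_le_emultiplicity_of_dvd_right (dvd_iff_le.mpr map_comap_le)⟩

end Ideal

theorem units_composite_injective_split_case_general
    (F K : Type*) [Field F] [Field K] [NumberField F] [NumberField K] [Algebra F K]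
    (p : Ideal (𝓞 F)) (hp : p.IsPrime) (hpbot : p ≠ ⊥)
    (P Pbar : Ideal (𝓞 K)) (hP : P.IsPrime) (hPbar : Pbar.IsPrime) (hne : P ≠ Pbar)
    (hsplit : Ideal.map (algebraMap (𝓞 F) (𝓞 K)) p = P * Pbar)
    (fplus : Ideal (𝓞 F)) (hfplusbot : fplus ≠ ⊥)
    (m : Ideal (𝓞 K))
    (hm : P * m = Ideal.map (algebraMap (𝓞 F) (𝓞 K)) fplus)
    (hle : Ideal.map (algebraMap (𝓞 F) (𝓞 K)) fplus ≤ m) :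
    Function.Injective
      (Units.map ((Ideal.Quotient.factor hle).comp
        (Ideal.quotientMap (Ideal.map (algebraMap (𝓞 F) (𝓞 K)) fplus)
          (algebraMap (𝓞 F) (𝓞 K)) Ideal.le_comap_map)).toMonoidHom) := by
  have := hp.isMaximal hpbot
  have : P.LiesOver p := Ideal.liesOver_of_map_le (hsplit.le.trans Ideal.mul_le_left)
  have hPprime : Prime P :=
    Ideal.prime_of_isPrime (Ideal.ne_bot_of_liesOver_of_ne_bot hpbot P) hP
  have hcomap : m.comap (algebraMap (𝓞 F) (𝓞 K)) ≤ fplus :=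
    Ideal.comap_le_of_forall_exists_emultiplicity_map_le hfplusbot fun v hv ↦
      (Ideal.exists_prime_liesOver_ne_of_map_eq_mul hp hpbot hP hPbar hne hsplit v hv).imp
        fun w ⟨hw, hwv, hwP⟩ ↦ ⟨hw, hwv, by
          rw [← hm, emultiplicity_mul hw,
            emultiplicity_eq_zero_of_irreducible_ne hw.irreducible hPprime.irreducible hwP,
            zero_add]⟩
  have hcomp : (Ideal.Quotient.factor hle).comp (Ideal.quotientMap _ _ Ideal.le_comap_map) =
      Ideal.quotientMap m (algebraMap (𝓞 F) (𝓞 K)) (Ideal.map_le_iff_le_comap.mp hle) :=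
    Ideal.Quotient.ringHom_ext rfl
  exact Units.map_injective (hcomp ▸ Ideal.quotientMap_injective' hcomap)

/-- Let `K/F` be a quadratic extension of number fields, `p` a prime of `O_F` split in
`O_K` as `p·O_K = P·P̄` with `P ≠ P̄`, `f⁺ ⊆ O_F` an ideal divisible by `p`,
`f = f⁺·O_K` and `m = f·P⁻¹` (so `f = P·m`).  Then the composite map
`(O_F/f⁺)^* → (O_K/f)^* → (O_K/m)^*` is injective. -/
theorem units_composite_injective_split_case
    (F K : Type*) [Field F] [Field K] [NumberField F] [NumberField K] [Algebra F K]
    (hquad : Module.finrank F K = 2)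
    (p : Ideal (𝓞 F)) (hp : p.IsPrime) (hpbot : p ≠ ⊥)
    (P Pbar : Ideal (𝓞 K)) (hP : P.IsPrime) (hPbar : Pbar.IsPrime) (hne : P ≠ Pbar)
    (hsplit : Ideal.map (algebraMap (𝓞 F) (𝓞 K)) p = P * Pbar)
    (fplus : Ideal (𝓞 F)) (hfplusbot : fplus ≠ ⊥) (hdvd : p ∣ fplus)
    (m : Ideal (𝓞 K))
    (hm : P * m = Ideal.map (algebraMap (𝓞 F) (𝓞 K)) fplus)
    (hle : Ideal.map (algebraMap (𝓞 F) (𝓞 K)) fplus ≤ m) :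
    Function.Injective
      (Units.map ((Ideal.Quotient.factor hle).comp
        (Ideal.quotientMap (Ideal.map (algebraMap (𝓞 F) (𝓞 K)) fplus)
          (algebraMap (𝓞 F) (𝓞 K)) Ideal.le_comap_map)).toMonoidHom) :=
  units_composite_injective_split_case_general F K p hp hpbot P Pbar hP hPbar hne hsplit fplus
    hfplusbot m hm hle
end
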